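/- Let ħ > 0 and let Σ be a real symmetric positive definite 2n×2n matrix. Then the complex Hermitian matrix Σ + (iħ/2)J is positive semidefinite if and only if every complex eigenvalue of the matrix JΣ has modulus ≥ ħ/2 (equivalently, all symplectic eigenvalues λ₁^ω, …, λ_n^ω of Σ satisfy λ_j^ω ≥ ħ/2). -/

import Mathlib

open Matrix ComplexOrder MeasureTheory

noncomputable section

/-- Phase space ℝ^{2n} ≃ ℝⁿ × ℝⁿ, with coordinates z = (x,p). -/
abbrev PS (n : ℕ) := Fin n ⊕ Fin n → ℝ

/-- The standard symplectic matrix J = [[0, I], [-I, 0]]. -/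
def Jmat (n : ℕ) : Matrix (Fin n ⊕ Fin n) (Fin n ⊕ Fin n) ℝ :=
  Matrix.fromBlocks 0 1 (-1) 0

/-- The standard symplectic form ω(z,z′) = (Jz)·z′. -/
def symp (n : ℕ) (z z' : PS n) : ℝ := (Jmat n).mulVec z ⬝ᵥ z'

/-- The symplectic group Sp(n) = {S : SᵀJS = J}. -/
def Sp (n : ℕ) : Set (Matrix (Fin n ⊕ Fin n) (Fin n ⊕ Fin n) ℝ) :=
  {S | Sᵀ * Jmat n * S = Jmat n}

/-!
Write `Σ = R²` with `R = Σ^{1/2}` real symmetric and invertible, and let `G = i R J R`, a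
Hermitian matrix. Congruence by the invertible matrix `R J` turns `Σ + (iℏ/2) J` into
`G² + (ℏ/2) G`, which is positive semidefinite iff `x (x + ℏ/2) ≥ 0` for every eigenvalue `x`
of `G`. Since `(R J R)ᵀ = -R J R`, the spectrum of `G` is symmetric about `0`, and it does not
contain `0`; so the condition says `|x| ≥ ℏ/2` for every eigenvalue. Finally `J Σ = J R R` is
similar to `R J R = -i G`, whose eigenvalues have the same moduli as those of `G`.
-/

open scoped MatrixOrder Pointwise

theorem forall_mul_add_nonneg_iff_forall_le_abs {S : Set ℝ} {c : ℝ} (hc : 0 ≤ c)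
    (hS : ∀ x ∈ S, -x ∈ S) (h0 : (0 : ℝ) ∉ S) :
    (∀ x ∈ S, 0 ≤ x * (x + c)) ↔ ∀ x ∈ S, c ≤ |x| := by
  refine ⟨fun h x hx => ?_, fun h x hx => ?_⟩
  · have hneg := h (-x) (hS x hx)
    rcases (ne_of_mem_of_not_mem hx h0).lt_or_gt with hx' | hx'
    · rw [abs_of_neg hx']; nlinarith [h x hx]
    · rw [abs_of_pos hx']; nlinarith
  · have := h x hx
    rcases abs_cases x with ⟨hab, _⟩ | ⟨hab, _⟩ <;> nlinarith

theorem spectrum_mul_comm_of_isUnit {R A : Type*} [CommSemiring R] [Ring A] [Algebra R A]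
    {u : A} (hu : IsUnit u) (a : A) : spectrum R (u * a) = spectrum R (a * u) := by
  obtain ⟨u, rfl⟩ := hu
  rw [← spectrum.units_conjugate (u := u) (a := a * u), mul_assoc, mul_assoc, Units.mul_inv,
    mul_one]

namespace Matrix

variable {m : Type*} [Fintype m] [DecidableEq m]

theorem spectrum_transpose {R A : Type*} [CommSemiring R] [CommRing A] [Algebra R A]
    (M : Matrix m m A) : spectrum R Mᵀ = spectrum R M := by
  ext r
  rw [spectrum.mem_iff, spectrum.mem_iff, ← isUnit_transpose, transpose_sub,
    Algebra.algebraMap_eq_smul_one, transpose_smul, transpose_one, transpose_transpose]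

theorem neg_mem_spectrum_of_transpose_eq_neg {R A : Type*} [CommRing R] [CommRing A]
    [Algebra R A] {G : Matrix m m A} (hG : Gᵀ = -G) {x : R} (hx : x ∈ spectrum R G) :
    -x ∈ spectrum R G := by
  rwa [← spectrum_transpose, hG, ← spectrum.neg_eq, Set.neg_mem_neg]

omit [DecidableEq m] in
theorem map_ofReal_mul (M N : Matrix m m ℝ) :
    (M * N).map Complex.ofReal = M.map Complex.ofReal * N.map Complex.ofReal :=
  Matrix.map_mul (f := Complex.ofRealHom)

theorem PosDef.exists_isHermitian_isUnit_mul_self_eq {S : Matrix m m ℝ} (hS : S.PosDef) :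
    ∃ R : Matrix m m ℝ, R.IsHermitian ∧ IsUnit R ∧ R * R = S :=
  ⟨CFC.sqrt S, (CFC.sqrt_nonneg S).posSemidef.isHermitian,
    (CFC.isUnit_sqrt_iff S hS.posSemidef.nonneg).2 hS.isUnit,
    CFC.sqrt_mul_sqrt_self S hS.posSemidef.nonneg⟩

namespace IsHermitian

variable {G : Matrix m m ℂ}

theorem spectrum_eq_image_spectrum_real (hG : G.IsHermitian) :
    spectrum ℂ G = Complex.ofReal '' spectrum ℝ G := by
  rw [hG.spectrum_eq_image_range, hG.spectrum_real_eq_range_eigenvalues]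
  rfl

theorem posSemidef_mul_self_add_smul_iff (hG : G.IsHermitian) (c : ℝ) :
    (G * G + (c : ℂ) • G).PosSemidef ↔ ∀ x ∈ spectrum ℝ G, 0 ≤ x * (x + c) := by
  have hcfc : G * G + (c : ℂ) • G = cfc (fun x : ℝ => x * x + c * x) G := by
    rw [cfc_add .., cfc_mul .., cfc_const_mul .., cfc_id' ℝ G hG.isSelfAdjoint, Complex.coe_smul]
  rw [← nonneg_iff_posSemidef, hcfc, cfc_nonneg_iff _ G (by fun_prop) hG.isSelfAdjoint]
  simp only [mul_add, mul_comm c]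

end IsHermitian

theorem forall_norm_spectrum_iff_of_isHermitian_I_smul {K : Matrix m m ℂ}
    (hK : (Complex.I • K).IsHermitian) (p : ℝ → Prop) :
    (∀ μ ∈ spectrum ℂ K, p ‖μ‖) ↔ ∀ x ∈ spectrum ℝ (Complex.I • K), p |x| := by
  have hspec : (Complex.I • ·) '' spectrum ℂ K = Complex.ofReal '' spectrum ℝ (Complex.I • K) := by
    rw [Set.image_smul, ← hK.spectrum_eq_image_spectrum_real]
    exact (spectrum.unit_smul_eq_smul K (Units.mk0 Complex.I Complex.I_ne_zero)).symm
  calc (∀ μ ∈ spectrum ℂ K, p ‖μ‖) ↔ ∀ t ∈ (Complex.I • ·) '' spectrum ℂ K, p ‖t‖ := by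
        simp only [Set.forall_mem_image, smul_eq_mul, norm_mul, Complex.norm_I, one_mul]
    _ ↔ ∀ x ∈ spectrum ℝ (Complex.I • K), p |x| := by
        simp only [hspec, Set.forall_mem_image, Complex.norm_real, Real.norm_eq_abs]

section SkewConjugate

variable {J R : Matrix m m ℂ}

omit [DecidableEq m] in
theorem isHermitian_I_smul_mul_mul (hJ : Jᴴ = -J) (hR : Rᴴ = R) :
    (Complex.I • (R * J * R)).IsHermitian := by
  simp [IsHermitian, conjTranspose_smul, conjTranspose_mul, hJ, hR, Matrix.mul_assoc]

omit [DecidableEq m] in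
theorem transpose_I_smul_mul_mul (hJ : Jᵀ = -J) (hR : Rᵀ = R) :
    (Complex.I • (R * J * R))ᵀ = -(Complex.I • (R * J * R)) := by
  simp [transpose_smul, transpose_mul, hJ, hR, Matrix.mul_assoc]

theorem isUnit_I_smul_mul_mul (hJ : IsUnit J) (hR : IsUnit R) :
    IsUnit (Complex.I • (R * J * R)) :=
  ((hR.mul hJ).mul hR).smul (Units.mk0 Complex.I Complex.I_ne_zero)

theorem posSemidef_mul_self_add_smul_iff_I_smul_mul_mul (hJ : Jᴴ = -J) (hJJ : J * J = -1)
    (hR : Rᴴ = R) (hRu : IsUnit R) (c : ℂ) :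
    (R * R + (c * Complex.I) • J).PosSemidef ↔
      (Complex.I • (R * J * R) * (Complex.I • (R * J * R)) +
        c • (Complex.I • (R * J * R))).PosSemidef := by
  have hJu : IsUnit J := IsUnit.of_mul_eq_one (-J) (by rw [Matrix.mul_neg, hJJ, neg_neg])
  have hJJ' : ∀ X : Matrix m m ℂ, J * (J * X) = -X := fun X => by
    rw [← Matrix.mul_assoc, hJJ, Matrix.neg_mul, Matrix.one_mul]
  rw [← (hRu.mul hJu).posSemidef_star_right_conjugate_iff]
  congr! 1
  simp only [star_mul, star_eq_conjTranspose, hJ, hR, Matrix.mul_add, Matrix.add_mul,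
    Matrix.mul_smul, Matrix.smul_mul, Matrix.mul_assoc, Matrix.mul_neg, Matrix.neg_mul, hJJ',
    smul_smul, Complex.I_mul_I, neg_smul, one_smul, smul_neg, neg_add, neg_neg]

end SkewConjugate

theorem J_conjTranspose (l R : Type*) [DecidableEq l] [CommRing R] [StarRing R] :
    (J l R)ᴴ = -J l R := by
  rw [conjTranspose, J_transpose, Matrix.map_neg _ star_neg]
  exact congrArg Neg.neg (map_J l (starRingEnd R))

end Matrix

theorem Jmat_map_ofReal (n : ℕ) : (Jmat n).map Complex.ofReal = -J (Fin n) ℂ := by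
  simp [Jmat, J, fromBlocks_map, fromBlocks_neg, Matrix.map_neg]

theorem RSUP_iff_symplectic_eigenvalues (n : ℕ) (ℏ : ℝ) (hℏ : 0 < ℏ)
    (Sig : Matrix (Fin n ⊕ Fin n) (Fin n ⊕ Fin n) ℝ) (hSig : Sig.PosDef) :
    (Sig.map (Complex.ofReal) +
        (((ℏ : ℂ) / 2) * Complex.I) • (Jmat n).map (Complex.ofReal)).PosSemidef ↔
      ∀ μ ∈ spectrum ℂ ((Jmat n * Sig).map (Complex.ofReal)), ℏ / 2 ≤ ‖μ‖ := by
  obtain ⟨R, hR, hRu, rfl⟩ := hSig.exists_isHermitian_isUnit_mul_self_eq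
  set Rc := R.map Complex.ofReal
  have hRc : Rc.IsHermitian := hR.map _ fun x => (Complex.conj_ofReal x).symm
  have hRcT : Rcᵀ = Rc := by
    rw [← transpose_map, ← conjTranspose_eq_transpose_of_trivial, hR.eq]
  have hRcu : IsUnit Rc := hRu.map Complex.ofRealHom.mapMatrix
  have hJ : (-J (Fin n) ℂ)ᴴ = -(-J (Fin n) ℂ) := by rw [conjTranspose_neg, J_conjTranspose]
  have hJJ : -J (Fin n) ℂ * -J (Fin n) ℂ = -1 := by rw [neg_mul_neg, J_squared]
  have hJu : IsUnit (-J (Fin n) ℂ) := IsUnit.of_mul_eq_one _ (by rw [Matrix.mul_neg, hJJ, neg_neg])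
  set G := Complex.I • (Rc * -J (Fin n) ℂ * Rc)
  have hG : G.IsHermitian := isHermitian_I_smul_mul_mul hJ hRc
  have hGT : Gᵀ = -G := transpose_I_smul_mul_mul (by rw [transpose_neg, J_transpose]) hRcT
  rw [map_ofReal_mul, Jmat_map_ofReal,
    posSemidef_mul_self_add_smul_iff_I_smul_mul_mul hJ hJJ hRc hRcu,
    show (ℏ : ℂ) / 2 = ((ℏ / 2 : ℝ) : ℂ) by push_cast; ring, hG.posSemidef_mul_self_add_smul_iff,
    map_ofReal_mul, map_ofReal_mul, Jmat_map_ofReal, ← Matrix.mul_assoc,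
    ← spectrum_mul_comm_of_isUnit hRcu, ← Matrix.mul_assoc,
    forall_norm_spectrum_iff_of_isHermitian_I_smul hG]
  exact forall_mul_add_nonneg_iff_forall_le_abs (by positivity)
    (fun x hx => neg_mem_spectrum_of_transpose_eq_neg hGT hx)
    (fun h0 => (spectrum.zero_mem_iff ℝ).1 h0 (isUnit_I_smul_mul_mul hJu hRcu))
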